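/- Let f : {−1,1}^n → [0,1], let t > 0 and δ ∈ ℝ, and suppose there exists a half-space B ⊆ {−1,1}^n with Cov(P_t f, 1_B) ≥ δ. Then there exists a half-space B' ⊆ {−1,1}^n with Cov(f, 1_{B'}) ≥ δ. -/
import Mathlib


open Real

/-- The `±1` value of a boolean coordinate. -/
noncomputable def bval (b : Bool) : ℝ := if b then 1 else -1

/-- Expectation with respect to the uniform measure on the discrete cube `{-1,1}^n`. -/
noncomputable def bExp (n : ℕ) (f : (Fin n → Bool) → ℝ) : ℝ :=
  (∑ x : Fin n → Bool, f x) / 2 ^ n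

/-- Covariance on the discrete cube. -/
noncomputable def bCov (n : ℕ) (f g : (Fin n → Bool) → ℝ) : ℝ :=
  bExp n (fun x => (f x - bExp n f) * (g x - bExp n g))

/-- Variance on the discrete cube. -/
noncomputable def bVar (n : ℕ) (f : (Fin n → Bool) → ℝ) : ℝ := bCov n f f

/-- The character `χ_S(x) = ∏_{i ∈ S} x_i`. -/
noncomputable def chi (n : ℕ) (S : Finset (Fin n)) (x : Fin n → Bool) : ℝ :=
  ∏ i ∈ S, bval (x i)

/-- The Fourier coefficient `f̂(S) = E[f χ_S]`. -/
noncomputable def fourierCoef (n : ℕ) (f : (Fin n → Bool) → ℝ) (S : Finset (Fin n)) : ℝ :=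
  bExp n (fun x => f x * chi n S x)

/-- The Bonami--Beckner semigroup `P_t f = Σ_S e^{-t|S|} f̂(S) χ_S`. -/
noncomputable def bP (n : ℕ) (t : ℝ) (f : (Fin n → Bool) → ℝ) : (Fin n → Bool) → ℝ :=
  fun x => ∑ S : Finset (Fin n), Real.exp (-t * S.card) * fourierCoef n f S * chi n S x

/-- A half-space `{x : ⟨a, x⟩ ≤ b}` in `{-1,1}^n`. -/
def IsHalfspaceB {n : ℕ} (A : Set (Fin n → Bool)) : Prop :=
  ∃ (a : Fin n → ℝ) (b : ℝ), A = {x | ∑ i, a i * bval (x i) ≤ b}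

/-- `M(g)`: the supremum over half-spaces `A` of `Cov(g, 1_A)`. -/
noncomputable def Mb (n : ℕ) (g : (Fin n → Bool) → ℝ) : ℝ :=
  ⨆ A : {A : Set (Fin n → Bool) // IsHalfspaceB A}, bCov n g (Set.indicator A.1 1)

/-- `z ⊘ x`: coordinates where `z` is `none` (i.e. 0) are filled in by `x`. -/
def oslash {n : ℕ} (z : Fin n → Option Bool) (x : Fin n → Bool) : Fin n → Bool :=
  fun i => (z i).getD (x i)

/-- The restriction `f_z(x) = f(z ⊘ x)`. -/
noncomputable def restrictF {n : ℕ} (f : (Fin n → Bool) → ℝ) (z : Fin n → Option Bool) :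
    (Fin n → Bool) → ℝ := fun x => f (oslash z x)

/-- The `μ_s`-probability of the restriction pattern `z ∈ {-1,0,1}^n`: each coordinate is
independently `0` (here `none`) with probability `e^{-s}`, and `±1` with probability
`(1-e^{-s})/2` each. -/
noncomputable def muWeight (n : ℕ) (s : ℝ) (z : Fin n → Option Bool) : ℝ :=
  ∏ i, if z i = none then Real.exp (-s) else (1 - Real.exp (-s)) / 2

/-- Expectation over a random restriction `Z ∼ μ_s`. -/
noncomputable def restExp (n : ℕ) (s : ℝ) (g : (Fin n → Option Bool) → ℝ) : ℝ :=
  ∑ z : Fin n → Option Bool, muWeight n s z * g z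

/-- `w₁(f) = Σ_i f̂({i})²`. -/
noncomputable def w1b (n : ℕ) (f : (Fin n → Bool) → ℝ) : ℝ :=
  ∑ i : Fin n, (fourierCoef n f {i}) ^ 2

/-- The boolean version of the ball example: `n = m²`, the coordinates are split into `m`
consecutive blocks `J_i = {j : j / m = i}` of size `m`, and
`B^{(m)} = {x : Σ_i (m^{-1/2} Σ_{j ∈ J_i} x_j)² ≤ m}`. -/
noncomputable def Bm (m : ℕ) : Set (Fin (m*m) → Bool) :=
  {x | ∑ i : Fin m,
    ((∑ j : Fin (m*m), if (j : ℕ) / m = (i : ℕ) then bval (x j) else 0) / Real.sqrt m) ^ 2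
      ≤ (m : ℝ)}

-- auxiliary lemmas

lemma sum_chi_mul (n : ℕ) (x y : Fin n → Bool) :
    ∑ S : Finset (Fin n), chi n S x * chi n S y = if x = y then (2:ℝ)^n else 0 := by
  have h1 : ∀ S : Finset (Fin n), chi n S x * chi n S y
      = ∏ i ∈ S, (bval (x i) * bval (y i)) := by
    intro S; simp [chi, Finset.prod_mul_distrib]
  calc ∑ S : Finset (Fin n), chi n S x * chi n S y
      = ∑ S ∈ Finset.univ.powerset, (∏ i ∈ S, (bval (x i) * bval (y i))) * ∏ i ∈ Finset.univ \ S, (1:ℝ) := by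
        rw [Finset.powerset_univ]; simp [h1]
    _ = ∏ i : Fin n, (bval (x i) * bval (y i) + 1) := (Finset.prod_add _ _ _).symm
    _ = ∏ i : Fin n, (if x i = y i then (2:ℝ) else 0) := by
        apply Finset.prod_congr rfl; intro i _
        cases hx : x i <;> cases hy : y i <;> norm_num [bval]
    _ = if x = y then (2:ℝ)^n else 0 := by
        by_cases hxy : x = y
        · subst hxy; simp
        · rw [if_neg hxy]
          obtain ⟨i, hi⟩ := Function.ne_iff.mp hxy
          exact Finset.prod_eq_zero (Finset.mem_univ i) (by simp [hi])

lemma fourier_inversion (n : ℕ) (f : (Fin n → Bool) → ℝ) (y : Fin n → Bool) :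
    ∑ S : Finset (Fin n), fourierCoef n f S * chi n S y = f y := by
  have h2 : (2:ℝ)^n ≠ 0 := by positivity
  simp only [fourierCoef, bExp]
  have key : ∑ S : Finset (Fin n), (∑ x : Fin n → Bool, f x * chi n S x) * chi n S y
      = f y * 2^n := by
    simp_rw [Finset.sum_mul, mul_assoc]
    rw [Finset.sum_comm]
    simp_rw [← Finset.mul_sum, sum_chi_mul]
    simp [mul_ite]
  simp_rw [div_mul_eq_mul_div]
  rw [← Finset.sum_div, key, mul_div_assoc, div_self h2, mul_one]

lemma sum_mu_chi (n : ℕ) (t : ℝ) (S : Finset (Fin n)) (x : Fin n → Bool) :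
    ∑ z : Fin n → Option Bool, muWeight n t z * chi n S (oslash z x)
      = Real.exp (-t * S.card) * chi n S x := by
  have key : ∀ z : Fin n → Option Bool, muWeight n t z * chi n S (oslash z x)
      = ∏ i, ((if z i = none then Real.exp (-t) else (1 - Real.exp (-t)) / 2)
            * (if i ∈ S then bval ((z i).getD (x i)) else 1)) := by
    intro z
    rw [Finset.prod_mul_distrib]
    congr 1
    rw [Finset.prod_ite_mem, Finset.univ_inter]
    rfl
  simp_rw [key]
  rw [show (Finset.univ : Finset (Fin n → Option Bool))
      = Fintype.piFinset (fun _ => Finset.univ) from Fintype.piFinset_univ.symm,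
    ← Finset.prod_univ_sum (fun _ => (Finset.univ : Finset (Option Bool)))
      (fun i o => (if o = none then Real.exp (-t) else (1 - Real.exp (-t)) / 2)
        * (if i ∈ S then bval (o.getD (x i)) else 1))]
  have percoord : ∀ i : Fin n, (∑ o : Option Bool,
      ((if o = none then Real.exp (-t) else (1 - Real.exp (-t)) / 2)
        * (if i ∈ S then bval (o.getD (x i)) else 1)))
      = if i ∈ S then Real.exp (-t) * bval (x i) else 1 := by
    intro i
    rw [Fintype.sum_option, Fintype.sum_bool]
    by_cases hi : i ∈ S <;> simp [hi, bval]
  simp_rw [percoord]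
  rw [Finset.prod_ite_mem, Finset.univ_inter, Finset.prod_mul_distrib, Finset.prod_const]
  rw [show -t * (S.card : ℝ) = (S.card : ℝ) * (-t) by ring, Real.exp_nat_mul]
  rfl

lemma bP_eq_restrict (n : ℕ) (t : ℝ) (g : (Fin n → Bool) → ℝ) (x : Fin n → Bool) :
    bP n t g x = ∑ z : Fin n → Option Bool, muWeight n t z * g (oslash z x) := by
  have hrep : ∀ z, g (oslash z x)
      = ∑ S : Finset (Fin n), fourierCoef n g S * chi n S (oslash z x) :=
    fun z => (fourier_inversion n g _).symm
  simp_rw [hrep, Finset.mul_sum]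
  rw [Finset.sum_comm]
  unfold bP
  apply Finset.sum_congr rfl
  intro S _
  have step : ∑ z : Fin n → Option Bool, muWeight n t z * (fourierCoef n g S * chi n S (oslash z x))
      = fourierCoef n g S * ∑ z : Fin n → Option Bool, muWeight n t z * chi n S (oslash z x) := by
    rw [Finset.mul_sum]; apply Finset.sum_congr rfl; intro z _; ring
  rw [step, sum_mu_chi]; ring

lemma muWeight_sum_one (n : ℕ) (t : ℝ) :
    ∑ z : Fin n → Option Bool, muWeight n t z = 1 := by
  unfold muWeight
  rw [show (Finset.univ : Finset (Fin n → Option Bool))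
      = Fintype.piFinset (fun _ => Finset.univ) from Fintype.piFinset_univ.symm,
    ← Finset.prod_univ_sum (fun _ => (Finset.univ : Finset (Option Bool)))
      (fun _ o => if o = none then Real.exp (-t) else (1 - Real.exp (-t)) / 2)]
  apply Finset.prod_eq_one
  intro i _
  rw [Fintype.sum_option, Fintype.sum_bool]
  simp

lemma muWeight_pos (n : ℕ) {t : ℝ} (ht : 0 < t) (z : Fin n → Option Bool) :
    0 < muWeight n t z := by
  apply Finset.prod_pos
  intro i _
  have h1 : Real.exp (-t) < 1 := by
    rw [← Real.exp_zero]; exact Real.exp_lt_exp.mpr (by linarith)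
  split
  · exact Real.exp_pos _
  · linarith

lemma bExp_chi (n : ℕ) (S : Finset (Fin n)) :
    bExp n (chi n S) = if S = ∅ then 1 else 0 := by
  unfold bExp chi
  have h1 : ∀ x : Fin n → Bool, ∏ i ∈ S, bval (x i)
      = ∏ i : Fin n, (if i ∈ S then bval (x i) else 1) := by
    intro x; rw [Finset.prod_ite_mem, Finset.univ_inter]
  simp_rw [h1]
  rw [show (Finset.univ : Finset (Fin n → Bool))
      = Fintype.piFinset (fun _ => Finset.univ) from Fintype.piFinset_univ.symm,
    ← Finset.prod_univ_sum (fun _ => (Finset.univ : Finset Bool))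
      (fun i b => if i ∈ S then bval b else 1)]
  have h2 : ∀ i : Fin n, (∑ b : Bool, if i ∈ S then bval b else 1)
      = if i ∈ S then 0 else 2 := by
    intro i; rw [Fintype.sum_bool]; by_cases hi : i ∈ S <;> norm_num [hi, bval]
  simp_rw [h2]
  by_cases hS : S = ∅
  · subst hS
    simp
  · obtain ⟨i, hi⟩ := Finset.nonempty_iff_ne_empty.mpr hS
    rw [if_neg hS, Finset.prod_eq_zero (Finset.mem_univ i) (by simp [hi]), zero_div]

lemma bCov_eq (n : ℕ) (f g : (Fin n → Bool) → ℝ) :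
    bCov n f g = bExp n (fun x => f x * g x) - bExp n f * bExp n g := by
  have h2 : (2:ℝ)^n ≠ 0 := by positivity
  have hcard : ((Finset.univ : Finset (Fin n → Bool)).card : ℝ) = 2^n := by
    simp [Fintype.card_fun]
  have expand : ∀ a b : ℝ, ∑ x : Fin n → Bool, (f x - a) * (g x - b)
      = (∑ x : Fin n → Bool, f x * g x) - (∑ x : Fin n → Bool, f x) * b
        - a * (∑ x : Fin n → Bool, g x) + (2^n : ℝ) * (a * b) := by
    intro a b
    have hx : ∀ x : Fin n → Bool, (f x - a) * (g x - b)
        = f x * g x - f x * b - a * g x + a * b := fun x => by ring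
    simp_rw [hx]
    rw [Finset.sum_add_distrib, Finset.sum_sub_distrib, Finset.sum_sub_distrib,
      ← Finset.sum_mul, ← Finset.mul_sum, Finset.sum_const, nsmul_eq_mul, hcard]
  unfold bCov bExp
  simp only []
  rw [expand]
  field_simp
  ring

lemma bExp_bP (n : ℕ) (t : ℝ) (f : (Fin n → Bool) → ℝ) :
    bExp n (bP n t f) = bExp n f := by
  have h1 : bExp n (bP n t f)
      = ∑ S : Finset (Fin n), Real.exp (-t*S.card) * fourierCoef n f S * bExp n (chi n S) := by
    unfold bExp bP
    rw [Finset.sum_comm, Finset.sum_div]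
    apply Finset.sum_congr rfl
    intro S _
    rw [← Finset.mul_sum, mul_div_assoc]
  rw [h1]
  simp_rw [bExp_chi, mul_ite, mul_one, mul_zero]
  rw [Finset.sum_ite_eq' Finset.univ (∅ : Finset (Fin n))]
  simp [fourierCoef, chi]

lemma bExp_bP_mul (n : ℕ) (t : ℝ) (f g : (Fin n → Bool) → ℝ) :
    bExp n (fun x => bP n t f x * g x)
      = ∑ S : Finset (Fin n), Real.exp (-t*S.card) * (fourierCoef n f S * fourierCoef n g S) := by
  unfold bExp bP
  simp_rw [Finset.sum_mul]
  rw [Finset.sum_comm, Finset.sum_div]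
  apply Finset.sum_congr rfl
  intro S _
  have hx : ∀ x, Real.exp (-t*S.card) * fourierCoef n f S * chi n S x * g x
      = Real.exp (-t*S.card) * fourierCoef n f S * (g x * chi n S x) := fun x => by ring
  simp_rw [hx]
  rw [← Finset.mul_sum, mul_div_assoc]
  unfold fourierCoef bExp
  ring

lemma bCov_bP (n : ℕ) (t : ℝ) (f g : (Fin n → Bool) → ℝ) :
    bCov n (bP n t f) g = bCov n f (bP n t g) := by
  rw [bCov_eq, bCov_eq, bExp_bP, bExp_bP]
  congr 1
  rw [bExp_bP_mul]
  have comm : bExp n (fun x => f x * bP n t g x) = bExp n (fun x => bP n t g x * f x) := by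
    unfold bExp; simp_rw [mul_comm]
  rw [comm, bExp_bP_mul]
  apply Finset.sum_congr rfl; intro S _; ring

lemma bCov_sum (n : ℕ) {ι : Type*} [Fintype ι] (f : (Fin n → Bool) → ℝ)
    (c : ι → ℝ) (h : ι → (Fin n → Bool) → ℝ) :
    bCov n f (fun x => ∑ z : ι, c z * h z x) = ∑ z : ι, c z * bCov n f (h z) := by
  simp_rw [bCov_eq]
  have h1 : bExp n (fun x => f x * ∑ z : ι, c z * h z x)
      = ∑ z : ι, c z * bExp n (fun x => f x * h z x) := by
    unfold bExp
    simp_rw [Finset.mul_sum]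
    rw [Finset.sum_comm, Finset.sum_div]
    apply Finset.sum_congr rfl; intro z _
    have hx : ∀ x, f x * (c z * h z x) = c z * (f x * h z x) := fun x => by ring
    simp_rw [hx]
    rw [← Finset.mul_sum, mul_div_assoc]
  have h2 : bExp n (fun x => ∑ z : ι, c z * h z x) = ∑ z : ι, c z * bExp n (h z) := by
    unfold bExp
    rw [Finset.sum_comm, Finset.sum_div]
    apply Finset.sum_congr rfl; intro z _
    rw [← Finset.mul_sum, mul_div_assoc]
  rw [h1, h2, Finset.mul_sum, ← Finset.sum_sub_distrib]
  apply Finset.sum_congr rfl; intro z _; ring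

lemma indicator_oslash {n : ℕ} (B : Set (Fin n → Bool)) (z : Fin n → Option Bool)
    (x : Fin n → Bool) :
    Set.indicator B (1 : (Fin n → Bool) → ℝ) (oslash z x)
      = Set.indicator (oslash z ⁻¹' B) 1 x := by
  by_cases hx : oslash z x ∈ B <;> simp [Set.indicator_apply, hx, Set.mem_preimage]

lemma halfspace_preimage {n : ℕ} {B : Set (Fin n → Bool)} (hB : IsHalfspaceB B)
    (z : Fin n → Option Bool) : IsHalfspaceB (oslash z ⁻¹' B) := by
  obtain ⟨a, b, rfl⟩ := hB
  refine ⟨fun i => if z i = none then a i else 0,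
    b - ∑ i, (z i).elim (0:ℝ) (fun v => a i * bval v), ?_⟩
  ext x
  simp only [Set.mem_preimage, Set.mem_setOf_eq, oslash]
  have key : ∀ i, a i * bval ((z i).getD (x i))
      = (if z i = none then a i else 0) * bval (x i)
        + (z i).elim (0:ℝ) (fun v => a i * bval v) := by
    intro i; cases hz : z i <;> simp [hz]
  rw [show (∑ i, a i * bval ((z i).getD (x i)))
      = (∑ i, (if z i = none then a i else 0) * bval (x i))
        + ∑ i, (z i).elim (0:ℝ) (fun v => a i * bval v) from by
    rw [← Finset.sum_add_distrib]; exact Finset.sum_congr rfl fun i _ => key i]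
  constructor <;> intro hle <;> linarith

theorem stmt14 (n : ℕ) (f : (Fin n → Bool) → ℝ) (t δ : ℝ)
    (hrange : ∀ x, f x ∈ Set.Icc (0:ℝ) 1) (ht : 0 < t)
    (h : ∃ B : Set (Fin n → Bool), IsHalfspaceB B ∧
      bCov n (bP n t f) (Set.indicator B 1) ≥ δ) :
    ∃ B' : Set (Fin n → Bool), IsHalfspaceB B' ∧
      bCov n f (Set.indicator B' 1) ≥ δ := by
  obtain ⟨B, hB, hcov⟩ := h
  have e1 : bCov n (bP n t f) (Set.indicator B 1)
      = bCov n f (bP n t (Set.indicator B 1)) := bCov_bP n t f _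
  have e2 : bP n t (Set.indicator B 1)
      = fun x => ∑ z : Fin n → Option Bool,
          muWeight n t z * (Set.indicator (oslash z ⁻¹' B) 1 x) := by
    funext x
    rw [bP_eq_restrict]
    exact Finset.sum_congr rfl fun z _ => by rw [indicator_oslash]
  have e3 : bCov n f (bP n t (Set.indicator B 1))
      = ∑ z : Fin n → Option Bool,
          muWeight n t z * bCov n f (Set.indicator (oslash z ⁻¹' B) 1) := by
    rw [e2]; exact bCov_sum n f _ _
  have hsum : ∑ z : Fin n → Option Bool,
      muWeight n t z * bCov n f (Set.indicator (oslash z ⁻¹' B) 1) ≥ δ := by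
    rw [← e3, ← e1]; exact hcov
  by_contra hcon
  push_neg at hcon
  have hlt : ∀ z : Fin n → Option Bool,
      bCov n f (Set.indicator (oslash z ⁻¹' B) 1) < δ :=
    fun z => hcon _ (halfspace_preimage hB z)
  have hstrict : ∑ z : Fin n → Option Bool,
      muWeight n t z * bCov n f (Set.indicator (oslash z ⁻¹' B) 1)
      < ∑ z : Fin n → Option Bool, muWeight n t z * δ := by
    apply Finset.sum_lt_sum_of_nonempty Finset.univ_nonempty
    intro z _
    exact mul_lt_mul_of_pos_left (hlt z) (muWeight_pos n ht z)
  rw [← Finset.sum_mul, muWeight_sum_one, one_mul] at hstrict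
  linarith
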